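/- For the bit-reversal sequence e_k = exp(iπ Σ_j a_j 2^{−j}), the ordinary Lebesgue function λ_{E_k}(z) = Σ_{j<k}|l_{j,k}(z)| satisfies λ_{E_{2N}}(z) ≥ λ_{E_N}(z²) for all N ≥ 1 and all z on the unit circle, and consequently λ_{E_k}(e_k) ≥ 2^{σ₁(k)} − 1 for all k ≥ 1. -/

import Mathlib

/-- The bit-reversal (Van der Corput) Leja sequence on the unit circle:
`e k = exp(iπ Σ_j a_j 2^{-j})` where `k = Σ_j a_j 2^j` in binary. -/
noncomputable def e (k : ℕ) : ℂ :=
  Complex.exp (Real.pi * Complex.I *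
    ∑ j ∈ Finset.range (k + 1), if k.testBit j then ((1 : ℂ) / 2) ^ j else 0)

/-- Lagrange basis polynomial of index `j` for the nodes `z 0, …, z (k-1)`. -/
noncomputable def lag (z : ℕ → ℂ) (j k : ℕ) (x : ℂ) : ℂ :=
  ∏ i ∈ (Finset.range k).erase j, (x - z i) / (z j - z i)

/-- Quadratic Lebesgue function of the first `k` nodes. -/
noncomputable def leb2 (z : ℕ → ℂ) (k : ℕ) (x : ℂ) : ℝ :=
  Real.sqrt (∑ j ∈ Finset.range k, ‖lag z j k x‖ ^ 2)

/-- Ordinary Lebesgue function of the first `k` nodes. -/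
noncomputable def leb (z : ℕ → ℂ) (k : ℕ) (x : ℂ) : ℝ :=
  ∑ j ∈ Finset.range k, ‖lag z j k x‖

/-- number of ones in the binary expansion -/
def sigma1 (k : ℕ) : ℕ := (Nat.digits 2 k).count 1

/-!
The nodes satisfy `e (2t) ^ 2 = e t` and `e (2t + 1) = -e (2t)`: the first `2N` nodes are
the square roots of the first `N`. Multiplying the Lagrange factors of each pair of square roots
gives `l_{j,2N}(x) = (x + e_j) / (2 e_j) · l_{⌊j/2⌋,N}(x²)`, and summing over a pair with
`|x + w| + |x - w| ≥ 2` on the unit circle yields `λ_{2N}(x) ≥ λ_N(x²)`. At `x = e_{2m}` this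
is the even step of an induction over the binary digits of `k`; at the new odd node
`e_{2m+1} = -e_{2m}` the pair weights are exactly `1` and the new basis polynomial is `1`, so
`λ_{2m+1}(e_{2m+1}) = 2 λ_m(e_m) + 1`.
-/

open Finset

section Pairing

variable {M : Type*} [CommMonoid M]

@[to_additive sum_range_two_mul]
lemma prod_range_two_mul (g : ℕ → M) (m : ℕ) :
    ∏ t ∈ range (2 * m), g t = ∏ s ∈ range m, g (2 * s) * g (2 * s + 1) := by
  induction m with
  | zero => simp
  | succ m ih =>
    rw [Nat.mul_succ, prod_range_succ, prod_range_succ, prod_range_succ, ih, mul_assoc]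

lemma prod_erase_range_two_mul (g : ℕ → M) {m j j' : ℕ} (hj : j < 2 * m)
    (hj' : j' / 2 = j / 2) (hne : j' ≠ j) :
    ∏ t ∈ (range (2 * m)).erase j, g t
      = g j' * ∏ s ∈ (range m).erase (j / 2), g (2 * s) * g (2 * s + 1) := by
  set G := Function.update g j 1
  have hG : ∏ t ∈ range (2 * m), G t = ∏ t ∈ (range (2 * m)).erase j, g t := by
    rw [prod_update_of_mem (mem_range.2 hj), one_mul, sdiff_singleton_eq_erase]
  rw [← hG, prod_range_two_mul, ← mul_prod_erase _ _ (mem_range.2 (by omega : j / 2 < m))]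
  congr 1
  · obtain ⟨i, rfl | rfl⟩ := Nat.even_or_odd' j
    · obtain rfl : j' = 2 * i + 1 := by omega
      simp [G]
    · obtain rfl : j' = 2 * i := by omega
      simp [G, Nat.mul_add_div]
  · refine prod_congr rfl fun s hs => ?_
    have hs : s ≠ j / 2 := ne_of_mem_erase hs
    simp only [G, Function.update_of_ne (show 2 * s ≠ j by omega),
      Function.update_of_ne (show 2 * s + 1 ≠ j by omega)]

end Pairing

lemma lag_succ {z : ℕ → ℂ} {j k : ℕ} (hj : j < k) (x : ℂ) :
    lag z j (k + 1) x = lag z j k x * ((x - z k) / (z j - z k)) := by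
  rw [lag, lag, range_add_one, erase_insert_of_ne (by omega), prod_insert (by simp), mul_comm]

structure IsSqrtDoubling (z : ℕ → ℂ) : Prop where
  sq_two_mul : ∀ t, z (2 * t) ^ 2 = z t
  two_mul_add_one : ∀ t, z (2 * t + 1) = -z (2 * t)

namespace IsSqrtDoubling

variable {z : ℕ → ℂ}

lemma sq_eq_apply_div_two (hz : IsSqrtDoubling z) (j : ℕ) : z j ^ 2 = z (j / 2) := by
  obtain ⟨t, rfl | rfl⟩ := Nat.even_or_odd' j
  · rw [hz.sq_two_mul, Nat.mul_div_cancel_left t two_pos]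
  · rw [hz.two_mul_add_one, neg_sq, hz.sq_two_mul, Nat.mul_add_div two_pos]; rfl

lemma exists_sibling_eq_neg (hz : IsSqrtDoubling z) (j : ℕ) :
    ∃ j', j' / 2 = j / 2 ∧ j' ≠ j ∧ z j' = -z j := by
  obtain ⟨t, rfl | rfl⟩ := Nat.even_or_odd' j
  · exact ⟨2 * t + 1, by omega, by omega, hz.two_mul_add_one t⟩
  · exact ⟨2 * t, by omega, by omega, by rw [hz.two_mul_add_one, neg_neg]⟩

/-- Squaring halves the index, so induction on `a + b` reduces `z a = z b` to `a / 2 = b / 2`;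
the last binary digits then agree because `z (2t + 1) = -z (2t) ≠ z (2t)`. -/
theorem injective (hz : IsSqrtDoubling z) (hne : ∀ k, z k ≠ 0) : Function.Injective z := by
  suffices ∀ n a b, a + b ≤ n → z a = z b → a = b from fun a b => this _ a b le_rfl
  intro n
  induction n with
  | zero => intro a b h _; omega
  | succ n ih =>
    intro a b hab heq
    have hhalf : a / 2 = b / 2 := ih _ _ (by omega) (by
      rw [← hz.sq_eq_apply_div_two, heq, hz.sq_eq_apply_div_two])
    by_contra hab'
    obtain ⟨a', ha', hne', hza'⟩ := hz.exists_sibling_eq_neg a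
    obtain rfl : b = a' := by omega
    exact hne a (by linear_combination (heq + hza') / 2)

lemma lag_of_lt_two_mul (hz : IsSqrtDoubling z) {j m : ℕ} (hj : j < 2 * m) (x : ℂ) :
    lag z j (2 * m) x = (x + z j) / (2 * z j) * lag z (j / 2) m (x ^ 2) := by
  obtain ⟨j', hj', hne, hzj'⟩ := hz.exists_sibling_eq_neg j
  rw [lag, prod_erase_range_two_mul _ hj hj' hne, lag, hzj']
  congr 1
  · ring
  · refine prod_congr rfl fun s _ => ?_
    rw [div_mul_div_comm, hz.two_mul_add_one, ← hz.sq_two_mul s, ← hz.sq_eq_apply_div_two j]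
    ring

lemma lag_two_mul_two_mul_add_one_node (hz : IsSqrtDoubling z) (hinj : Function.Injective z)
    (m : ℕ) :
    lag z (2 * m) (2 * m + 1) (z (2 * m + 1)) = 1 := by
  rw [lag, range_add_one, erase_insert (by simp), prod_range_two_mul]
  refine prod_eq_one fun s hs => ?_
  have hsm : s < m := mem_range.1 hs
  have hnum : (z (2 * m + 1) - z (2 * s)) * (z (2 * m + 1) - -z (2 * s)) = z m - z s := by
    rw [hz.two_mul_add_one m]; linear_combination hz.sq_two_mul m - hz.sq_two_mul s
  have hden : (z (2 * m) - z (2 * s)) * (z (2 * m) - -z (2 * s)) = z m - z s := by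
    linear_combination hz.sq_two_mul m - hz.sq_two_mul s
  rw [div_mul_div_comm, hz.two_mul_add_one s, hnum, hden,
    div_self (sub_ne_zero.2 (hinj.ne hsm.ne'))]

theorem leb_sq_le_leb_two_mul (hz : IsSqrtDoubling z) (hnorm : ∀ t, ‖z t‖ = 1) (m : ℕ)
    {x : ℂ} (hx : ‖x‖ = 1) : leb z m (x ^ 2) ≤ leb z (2 * m) x := by
  have hlag : ∀ j < 2 * m,
      ‖lag z j (2 * m) x‖ = ‖x + z j‖ / 2 * ‖lag z (j / 2) m (x ^ 2)‖ := by
    intro j hj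
    rw [hz.lag_of_lt_two_mul hj, norm_mul, norm_div, norm_mul, hnorm]
    norm_num
  rw [leb, leb, sum_range_two_mul]
  refine sum_le_sum fun s hs => ?_
  have hsm : s < m := mem_range.1 hs
  rw [hlag _ (by omega), hlag _ (by omega), hz.two_mul_add_one,
    Nat.mul_div_cancel_left s two_pos, Nat.mul_add_div two_pos, Nat.div_eq_of_lt one_lt_two,
    add_zero]
  have htri : 2 ≤ ‖x + z (2 * s)‖ + ‖x + -z (2 * s)‖ := by
    calc (2 : ℝ) = ‖(x + z (2 * s)) + (x + -z (2 * s))‖ := by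
          rw [show (x + z (2 * s)) + (x + -z (2 * s)) = 2 * x by ring, norm_mul, hx]; norm_num
      _ ≤ _ := norm_add_le _ _
  nlinarith [norm_nonneg (lag z s m (x ^ 2))]

theorem leb_two_mul_add_one_node (hz : IsSqrtDoubling z) (hnorm : ∀ t, ‖z t‖ = 1) (m : ℕ) :
    leb z (2 * m + 1) (z (2 * m + 1)) = 2 * leb z m (z m) + 1 := by
  have hinj : Function.Injective z := hz.injective fun k => norm_ne_zero_iff.1 (by simp [hnorm])
  have hlag : ∀ j < 2 * m,
      ‖lag z j (2 * m + 1) (z (2 * m + 1))‖ = ‖lag z (j / 2) m (z m)‖ := by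
    intro j hj
    have hdist : ‖z j - z (2 * m)‖ ≠ 0 :=
      norm_ne_zero_iff.2 (sub_ne_zero.2 (hinj.ne (by omega)))
    rw [lag_succ hj, hz.lag_of_lt_two_mul hj, hz.sq_eq_apply_div_two, Nat.mul_add_div two_pos,
      Nat.div_eq_of_lt one_lt_two, add_zero, hz.two_mul_add_one, neg_add_eq_sub,
      show -z (2 * m) - z (2 * m) = -(2 * z (2 * m)) by ring]
    simp only [norm_mul, norm_div, norm_neg, hnorm, Complex.norm_ofNat]
    field_simp
  rw [leb, sum_range_succ, hz.lag_two_mul_two_mul_add_one_node hinj, sum_range_two_mul, leb,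
    mul_sum]
  congr 1
  · refine sum_congr rfl fun s hs => ?_
    have hsm : s < m := mem_range.1 hs
    rw [hlag _ (by omega), hlag _ (by omega), Nat.mul_div_cancel_left s two_pos,
      Nat.mul_add_div two_pos, Nat.div_eq_of_lt one_lt_two, add_zero, two_mul]
  · simp

end IsSqrtDoubling

noncomputable def bitRevAngle (k : ℕ) : ℂ :=
  ∑ j ∈ range (k + 1), if k.testBit j then ((1 : ℂ) / 2) ^ j else 0

lemma bitRevAngle_eq_sum_range {k n : ℕ} (hk : k < 2 ^ n) :
    bitRevAngle k = ∑ j ∈ range n, if k.testBit j then ((1 : ℂ) / 2) ^ j else 0 := by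
  have vanish : ∀ m, k < 2 ^ m → ∀ j ∈ range (max n (k + 1)), j ∉ range m →
      (if k.testBit j then ((1 : ℂ) / 2) ^ j else 0) = 0 := by
    intro m hm j _ hj
    rw [Nat.testBit_eq_false_of_lt (hm.trans_le (Nat.pow_le_pow_right two_pos (by simpa using hj)))]
    rfl
  rw [bitRevAngle, sum_subset (range_subset_range.2 (le_max_right n (k + 1)))
      (vanish _ (Nat.lt_two_pow_self.trans (Nat.pow_lt_pow_right one_lt_two (Nat.lt_succ_self k)))),
    sum_subset (range_subset_range.2 (le_max_left n (k + 1))) (vanish n hk)]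

lemma bitRevAngle_two_mul_add (t : ℕ) (b : Bool) :
    bitRevAngle (2 * t + b.toNat) = b.toNat + bitRevAngle t / 2 := by
  have hdiv : (2 * t + b.toNat) / 2 = t := by cases b <;> simp; omega
  rw [bitRevAngle, sum_range_succ', bitRevAngle_eq_sum_range (n := 2 * t + b.toNat)
    (Nat.lt_two_pow_self.trans_le (Nat.pow_le_pow_right two_pos (by omega)))]
  simp only [Nat.testBit_add_one, hdiv, sum_div]
  cases b <;> simp [pow_succ, apply_ite (· / (2 : ℂ)), add_comm, div_eq_mul_inv]

lemma e_eq_exp_bitRevAngle (k : ℕ) : e k = Complex.exp (Real.pi * Complex.I * bitRevAngle k) :=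
  rfl

lemma isSqrtDoubling_e : IsSqrtDoubling e where
  sq_two_mul t := by
    have h := bitRevAngle_two_mul_add t false
    simp only [Bool.toNat_false, add_zero, Nat.cast_zero, zero_add] at h
    rw [e_eq_exp_bitRevAngle, e_eq_exp_bitRevAngle, ← Complex.exp_nat_mul, h]
    ring_nf
  two_mul_add_one t := by
    have h := bitRevAngle_two_mul_add t true
    have h' := bitRevAngle_two_mul_add t false
    simp only [Bool.toNat_true, Bool.toNat_false, add_zero, Nat.cast_zero, Nat.cast_one,
      zero_add] at h h'
    rw [e_eq_exp_bitRevAngle, e_eq_exp_bitRevAngle, h, h', mul_add, mul_one, Complex.exp_add,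
      Complex.exp_pi_mul_I, neg_one_mul]

lemma norm_e (k : ℕ) : ‖e k‖ = 1 := by
  have him : ∀ j : ℕ, ((2 : ℂ) ^ j).im = 0 := fun j => by
    exact_mod_cast Complex.ofReal_im ((2 : ℝ) ^ j)
  rw [e, Complex.norm_exp]
  simp [Complex.mul_re, Complex.im_sum, apply_ite Complex.im, him]

lemma sigma1_two_mul (n : ℕ) : sigma1 (2 * n) = sigma1 n := by
  rcases Nat.eq_zero_or_pos n with rfl | hn
  · rfl
  rw [sigma1, sigma1, Nat.digits_def' one_lt_two (by omega)]
  simp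

lemma sigma1_two_mul_add_one (n : ℕ) : sigma1 (2 * n + 1) = sigma1 n + 1 := by
  rw [sigma1, sigma1, Nat.digits_def' one_lt_two (by omega)]
  simp [Nat.mul_add_div]

theorem two_pow_sigma1_sub_one_le_leb (k : ℕ) : (2 : ℝ) ^ sigma1 k - 1 ≤ leb e k (e k) := by
  induction k using Nat.evenOddRec with
  | h0 => simp [sigma1, leb]
  | h_even n ih =>
    rw [sigma1_two_mul]
    calc (2 : ℝ) ^ sigma1 n - 1 ≤ leb e n (e n) := ih
      _ = leb e n (e (2 * n) ^ 2) := by rw [isSqrtDoubling_e.sq_two_mul]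
      _ ≤ leb e (2 * n) (e (2 * n)) :=
        isSqrtDoubling_e.leb_sq_le_leb_two_mul norm_e n (norm_e _)
  | h_odd n ih =>
    rw [sigma1_two_mul_add_one, isSqrtDoubling_e.leb_two_mul_add_one_node norm_e,
      pow_succ]
    linarith

theorem leb_lower_bounds :
    (∀ N : ℕ, 1 ≤ N → ∀ z : ℂ, ‖z‖ = 1 → leb e N (z ^ 2) ≤ leb e (2 * N) z) ∧
      ∀ k : ℕ, 1 ≤ k → (2 : ℝ) ^ sigma1 k - 1 ≤ leb e k (e k) :=
  ⟨fun N _ _ hz => isSqrtDoubling_e.leb_sq_le_leb_two_mul norm_e N hz,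
    fun k _ => two_pow_sigma1_sub_one_le_leb k⟩
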